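/- arXiv:1901.01285 — 5 statements merged into one kernel-verified Lean document; each statement's English description precedes it below -/
import Mathlib

section
/- The pseudo controllability Gramian 𝒫 = ∫₀^∞ (e^{Aτ} − J) B Bᵀ (e^{Aᵀτ} − Jᵀ) dτ of a semistable system satisfies the Lyapunov-like equation A𝒫 + 𝒫Aᵀ + (I − J) B Bᵀ (I − Jᵀ) = 0. -/
open Matrix Filter NormedSpace MeasureTheory

/-! The limit `J` absorbs the flow, `e^{sA} J = J e^{sA} = J`, hence `J² = J` and `AJ = JA = 0`.
So `Q(t) = e^{tA} - J` is itself a semigroup, and since it tends to `0` it decays exponentially: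
once `‖Q T‖ ≤ e⁻¹`, `Q (r + kT) = Q r * (Q T)^k`. With `Q'` built in the same way from a second
pair `(A', J')`, the integrand `F(t) = Q(t) M Q'(t)` is therefore integrable and satisfies
`F' = A F + F A'`, so integrating over `(0, ∞)` gives `A 𝒫 + 𝒫 A' = -F(0) = -(1 - J) M (1 - J')`.
The theorem is the case `A' = Aᵀ`, `J' = Jᵀ`, `M = B Bᵀ` in the Frobenius-normed matrix algebra. -/

open Set Asymptotics

section Semigroup

variable {R : Type*} [NormedRing R] {Q : ℝ → R}

theorem norm_add_nat_mul_le_of_semigroup (hQ : ∀ s t, 0 ≤ s → 0 ≤ t → Q (s + t) = Q s * Q t)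
    {r T : ℝ} (hr : 0 ≤ r) (hT : 0 ≤ T) (k : ℕ) :
    ‖Q (r + k * T)‖ ≤ ‖Q r‖ * ‖Q T‖ ^ k := by
  induction k with
  | zero => simp
  | succ k ih =>
    have hsplit : Q (r + (k + 1 : ℕ) * T) = Q (r + k * T) * Q T := by
      rw [← hQ _ _ (by positivity) hT]; push_cast; ring_nf
    calc ‖Q (r + (k + 1 : ℕ) * T)‖ ≤ ‖Q (r + k * T)‖ * ‖Q T‖ := hsplit ▸ norm_mul_le _ _
      _ ≤ ‖Q r‖ * ‖Q T‖ ^ k * ‖Q T‖ := by gcongr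
      _ = ‖Q r‖ * ‖Q T‖ ^ (k + 1) := by ring

theorem exists_isBigO_exp_neg_of_semigroup (hQc : ContinuousOn Q (Ici 0))
    (hQ : ∀ s t, 0 ≤ s → 0 ≤ t → Q (s + t) = Q s * Q t) (hlim : Tendsto Q atTop (nhds 0)) :
    ∃ c > 0, Q =O[atTop] fun t => Real.exp (-c * t) := by
  obtain ⟨T, hT, hQT⟩ : ∃ T > 0, ‖Q T‖ ≤ Real.exp (-1) :=
    ((eventually_gt_atTop 0).and
      ((tendsto_zero_iff_norm_tendsto_zero.mp hlim).eventually_le_const (Real.exp_pos _))).exists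
  obtain ⟨M, hM⟩ := isCompact_Icc.exists_bound_of_continuousOn (hQc.mono Icc_subset_Ici_self)
  have hM0 : 0 ≤ M := (norm_nonneg _).trans (hM T ⟨hT.le, le_rfl⟩)
  refine ⟨T⁻¹, inv_pos.mpr hT, IsBigO.of_bound (M * Real.exp 1) ?_⟩
  filter_upwards [eventually_ge_atTop 0] with t ht
  set k := ⌊t / T⌋₊
  have hkT : k * T ≤ t := (le_div_iff₀ hT).mp (Nat.floor_le (by positivity))
  have hkT' : t < (k + 1) * T := (div_lt_iff₀ hT).mp (Nat.lt_floor_add_one _)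
  have hr : t - k * T ∈ Icc 0 T := ⟨by linarith, by linarith⟩
  calc ‖Q t‖ = ‖Q (t - k * T + k * T)‖ := by rw [sub_add_cancel]
    _ ≤ ‖Q (t - k * T)‖ * ‖Q T‖ ^ k := norm_add_nat_mul_le_of_semigroup hQ hr.1 hT.le k
    _ ≤ M * Real.exp (-1) ^ k := by gcongr; exact hM _ hr
    _ = M * Real.exp (-k) := by rw [← Real.exp_nat_mul]; ring_nf
    _ ≤ M * Real.exp (1 + -T⁻¹ * t) := by
        gcongr
        rw [neg_mul, ← div_eq_inv_mul]
        linarith [(div_lt_iff₀ hT).mpr hkT']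
    _ = M * Real.exp 1 * ‖Real.exp (-T⁻¹ * t)‖ := by
        rw [Real.exp_add, Real.norm_of_nonneg (Real.exp_pos _).le]; ring

end Semigroup

section Semistable

variable {𝔸 : Type*} [NormedRing 𝔸] [NormedAlgebra ℝ 𝔸] [CompleteSpace 𝔸] {A J : 𝔸}

theorem exp_smul_add_smul (s t : ℝ) : exp ((s + t) • A) = exp (s • A) * exp (t • A) := by
  let +nondep : NormedAlgebra ℚ 𝔸 := .restrictScalars ℚ ℝ 𝔸
  rw [add_smul, exp_add_of_commute (((Commute.refl A).smul_left s).smul_right t)]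

variable (hJ : Tendsto (fun t : ℝ => exp (t • A)) atTop (nhds J))
include hJ

theorem exp_smul_mul_of_tendsto (s : ℝ) : exp (s • A) * J = J := by
  refine tendsto_nhds_unique (hJ.const_mul _) ?_
  simp_rw [← exp_smul_add_smul]
  exact hJ.comp (tendsto_atTop_add_const_left _ s tendsto_id)

theorem mul_exp_smul_of_tendsto (s : ℝ) : J * exp (s • A) = J := by
  refine tendsto_nhds_unique (hJ.mul_const _) ?_
  simp_rw [← exp_smul_add_smul]
  exact hJ.comp (tendsto_atTop_add_const_right _ s tendsto_id)

theorem isIdempotentElem_of_tendsto_exp_smul : IsIdempotentElem J :=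
  tendsto_nhds_unique (hJ.mul_const J) <| by
    simpa only [exp_smul_mul_of_tendsto hJ] using tendsto_const_nhds

theorem mul_eq_zero_of_tendsto_exp_smul : A * J = 0 := by
  have h := (hasDerivAt_exp_smul_const' A (0 : ℝ)).mul_const J
  simp only [exp_smul_mul_of_tendsto hJ] at h
  simpa using (hasDerivAt_const (0 : ℝ) J).unique h |>.symm

theorem mul_eq_zero_of_tendsto_exp_smul' : J * A = 0 := by
  have h := (hasDerivAt_exp_smul_const A (0 : ℝ)).const_mul J
  simp only [mul_exp_smul_of_tendsto hJ] at h
  simpa using (hasDerivAt_const (0 : ℝ) J).unique h |>.symm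

theorem exp_add_smul_sub (s t : ℝ) :
    exp ((s + t) • A) - J = (exp (s • A) - J) * (exp (t • A) - J) := by
  rw [sub_mul, mul_sub, mul_sub, exp_smul_mul_of_tendsto hJ, mul_exp_smul_of_tendsto hJ,
    (isIdempotentElem_of_tendsto_exp_smul hJ).eq, ← exp_smul_add_smul]
  abel

theorem exists_isBigO_exp_smul_sub :
    ∃ c > 0, (fun t : ℝ => exp (t • A) - J) =O[atTop] fun t => Real.exp (-c * t) :=
  exists_isBigO_exp_neg_of_semigroup
    ((differentiable_exp_smul_const ℝ A).continuous.sub continuous_const).continuousOn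
    (fun s t _ _ => exp_add_smul_sub hJ s t) (by simpa using hJ.sub_const J)

end Semistable

section Gramian

variable {𝔸 : Type*} [NormedRing 𝔸] [NormedAlgebra ℝ 𝔸] [CompleteSpace 𝔸] {A J A' J' : 𝔸}

theorem hasDerivAt_exp_smul_sub (hAJ : A * J = 0) (t : ℝ) :
    HasDerivAt (fun t : ℝ => exp (t • A) - J) (A * (exp (t • A) - J)) t := by
  simpa only [mul_sub, hAJ, sub_zero] using (hasDerivAt_exp_smul_const' A t).sub_const J

theorem hasDerivAt_exp_smul_sub' (hJA : J * A = 0) (t : ℝ) :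
    HasDerivAt (fun t : ℝ => exp (t • A) - J) ((exp (t • A) - J) * A) t := by
  simpa only [sub_mul, hJA, sub_zero] using (hasDerivAt_exp_smul_const A t).sub_const J

noncomputable def pseudoGramian (A J A' J' M : 𝔸) : 𝔸 :=
  ∫ t in Ioi (0 : ℝ), (exp (t • A) - J) * M * (exp (t • A') - J')

variable (hJ : Tendsto (fun t : ℝ => exp (t • A)) atTop (nhds J))
  (hJ' : Tendsto (fun t : ℝ => exp (t • A')) atTop (nhds J')) (M : 𝔸)
include hJ hJ'

theorem integrableOn_pseudoGramian_integrand :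
    IntegrableOn (fun t : ℝ => (exp (t • A) - J) * M * (exp (t • A') - J')) (Ioi 0) := by
  obtain ⟨c, hc, hQ⟩ := exists_isBigO_exp_smul_sub hJ
  obtain ⟨c', hc', hQ'⟩ := exists_isBigO_exp_smul_sub hJ'
  have hO : (fun t : ℝ => (exp (t • A) - J) * M * (exp (t • A') - J')) =O[atTop]
      fun t => Real.exp (-(c + c') * t) := by
    refine ((hQ.mul (isBigO_const_const M one_ne_zero atTop)).mul hQ').congr_right fun t => ?_
    rw [mul_one, ← Real.exp_add]; ring_nf
  have hcont : Continuous fun t : ℝ => (exp (t • A) - J) * M * (exp (t • A') - J') :=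
    ((((differentiable_exp_smul_const ℝ A).continuous.sub continuous_const).mul
      continuous_const).mul ((differentiable_exp_smul_const ℝ A').continuous.sub continuous_const))
  exact ((hcont.continuousOn.locallyIntegrableOn measurableSet_Ici).integrableOn_of_isBigO_atTop
    hO ⟨Ioi 0, Ioi_mem_atTop 0, exp_neg_integrableOn_Ioi 0 (by positivity)⟩).mono_set
    Ioi_subset_Ici_self

theorem pseudoGramian_sylvester :
    A * pseudoGramian A J A' J' M + pseudoGramian A J A' J' M * A'
      + (1 - J) * M * (1 - J') = 0 := by
  set F := fun t : ℝ => (exp (t • A) - J) * M * (exp (t • A') - J')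
  have hF := integrableOn_pseudoGramian_integrand hJ hJ' M
  have hderiv : ∀ t ∈ Ici (0 : ℝ), HasDerivAt F (A * F t + F t * A') t := fun t _ => by
    refine (((hasDerivAt_exp_smul_sub (mul_eq_zero_of_tendsto_exp_smul hJ) t).mul_const M).mul
      (hasDerivAt_exp_smul_sub' (mul_eq_zero_of_tendsto_exp_smul' hJ') t)).congr_deriv ?_
    simp only [F, mul_assoc]
  have hlim : Tendsto F atTop (nhds 0) := by
    simpa using ((hJ.sub_const J).mul_const M).mul (hJ'.sub_const J')
  have hFTC := integral_Ioi_of_hasDerivAt_of_tendsto' hderiv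
    ((hF.const_mul A).add (hF.mul_const A')) hlim
  rw [integral_add (hF.const_mul A) (hF.mul_const A'), integral_const_mul_of_integrable hF,
    integral_mul_const_of_integrable hF] at hFTC
  simp only [F, zero_smul, exp_zero, zero_sub] at hFTC
  rw [pseudoGramian, hFTC, neg_add_cancel]

end Gramian

theorem Matrix.tendsto_exp_smul_transpose {m : Type*} [Fintype m] [DecidableEq m]
    {A J : Matrix m m ℝ}
    (hJ : Tendsto (fun t : ℝ => exp (t • A)) atTop (nhds J)) :
    Tendsto (fun t : ℝ => exp (t • Aᵀ)) atTop (nhds Jᵀ) := by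
  simpa only [← transpose_smul, exp_transpose, Function.comp_def, id] using
    (continuous_id.matrix_transpose.tendsto J).comp hJ

/-- The pseudo controllability Gramian `𝒫 = ∫₀^∞ (e^{Aτ} − J) B Bᵀ (e^{Aᵀτ} − Jᵀ) dτ`
of a semistable system satisfies `A𝒫 + 𝒫Aᵀ + (I − J)BBᵀ(I − Jᵀ) = 0`. -/
theorem pseudo_controllability_gramian_lyapunov
    {n p : ℕ} (A J P : Matrix (Fin n) (Fin n) ℝ) (B : Matrix (Fin n) (Fin p) ℝ)
    (hJ : Tendsto (fun t : ℝ => exp (t • A)) atTop (nhds J))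
    (hP : ∀ i j, P i j = ∫ τ in Set.Ioi (0:ℝ),
      (((exp (τ • A) - J) * (B * Bᵀ) * (exp (τ • A) - J)ᵀ) i j)) :
    A * P + P * Aᵀ + (1 - J) * (B * Bᵀ) * (1 - Jᵀ) = 0 := by
  let _ := Matrix.frobeniusNormedAddCommGroup (m := Fin n) (n := Fin n) (α := ℝ)
  let _ := Matrix.frobeniusNormedRing (m := Fin n) (α := ℝ)
  let _ := Matrix.frobeniusNormedAlgebra (m := Fin n) (R := ℝ) (α := ℝ)
  have hJt := Matrix.tendsto_exp_smul_transpose hJ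
  have hPG : P = pseudoGramian A J Aᵀ Jᵀ (B * Bᵀ) := by
    ext i j
    simp only [hP, pseudoGramian, transpose_sub, ← exp_transpose, transpose_smul]
    exact (entryLinearMap ℝ ℝ i j).toContinuousLinearMap.integral_comp_comm
      (integrableOn_pseudoGramian_integrand hJ hJt _)
  rw [hPG]
  exact pseudoGramian_sylvester hJ hJt _
end

section
/- For a semistable matrix A with J := lim_{t→∞} e^{At}, the pair of equations {A X + X Aᵀ + (I−J)BBᵀ(I−Jᵀ) = 0, J X Jᵀ = 0} has at most one symmetric solution X. -/
open Matrix Filter NormedSpace Topology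

/-! The difference `Δ = X - Y` solves the homogeneous Lyapunov equation `A Δ + Δ Aᵀ = 0`, so
`e^{tA} Δ e^{tAᵀ}` is constant in `t`. Letting `t → ∞` gives `Δ = J Δ Jᵀ`, which vanishes by the
second equation. -/

namespace Matrix

variable {m : Type*} [Fintype m] [DecidableEq m]

theorem exp_smul_mul_mul_exp_smul_transpose_eq_self {A Δ : Matrix m m ℝ}
    (h : A * Δ + Δ * Aᵀ = 0) (t : ℝ) : exp (t • A) * Δ * (exp (t • A))ᵀ = Δ := by
  have hsemiconj : SemiconjBy Δ (-(t • Aᵀ)) (t • A) := by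
    rw [SemiconjBy, mul_neg, neg_eq_iff_add_eq_zero, mul_smul_comm, smul_mul_assoc, ← smul_add,
      add_comm, h, smul_zero]
  -- `exp` depends only on the topology; the operator norm just supplies the Banach algebra.
  have hexp : exp (t • A) * Δ = Δ * exp (-(t • Aᵀ)) :=
    open scoped Norms.Operator in hsemiconj.exp_right.eq.symm
  have hinv : exp (-(t • Aᵀ)) * exp (t • Aᵀ) = 1 := by
    rw [← exp_add_of_commute _ _ (Commute.refl (t • Aᵀ)).neg_left, neg_add_cancel, exp_zero]
  rw [← exp_transpose, transpose_smul, hexp, mul_assoc, hinv, mul_one]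

theorem mul_mul_transpose_eq_self_of_tendsto_exp_smul {A J Δ : Matrix m m ℝ}
    (hJ : Tendsto (fun t : ℝ => exp (t • A)) atTop (𝓝 J)) (h : A * Δ + Δ * Aᵀ = 0) :
    J * Δ * Jᵀ = Δ := by
  have hlim : Tendsto (fun t : ℝ => exp (t • A) * Δ * (exp (t • A))ᵀ) atTop (𝓝 (J * Δ * Jᵀ)) :=
    (hJ.mul_const Δ).mul ((continuous_id.matrix_transpose.tendsto J).comp hJ)
  simp only [exp_smul_mul_mul_exp_smul_transpose_eq_self h] at hlim
  exact tendsto_nhds_unique hlim tendsto_const_nhds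

end Matrix

/-- For a semistable matrix `A` with `J := lim_{t→∞} e^{At}`, the pair of equations
`A X + X Aᵀ + (I−J)BBᵀ(I−Jᵀ) = 0` and `J X Jᵀ = 0` has at most one symmetric solution. -/
theorem pseudo_gramian_equations_unique_symmetric_solution
    {n p : ℕ} (A J : Matrix (Fin n) (Fin n) ℝ) (B : Matrix (Fin n) (Fin p) ℝ)
    (hJ : Tendsto (fun t : ℝ => exp (t • A)) atTop (nhds J)) :
    ∀ X Y : Matrix (Fin n) (Fin n) ℝ, Xᵀ = X → Yᵀ = Y →
      A * X + X * Aᵀ + (1 - J) * (B * Bᵀ) * (1 - Jᵀ) = 0 → J * X * Jᵀ = 0 →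
      A * Y + Y * Aᵀ + (1 - J) * (B * Bᵀ) * (1 - Jᵀ) = 0 → J * Y * Jᵀ = 0 →
      X = Y := by
  intro X Y _ _ hX hJX hY hJY
  have hlyap : A * (X - Y) + (X - Y) * Aᵀ = 0 := by
    calc A * (X - Y) + (X - Y) * Aᵀ
        = (A * X + X * Aᵀ + (1 - J) * (B * Bᵀ) * (1 - Jᵀ))
          - (A * Y + Y * Aᵀ + (1 - J) * (B * Bᵀ) * (1 - Jᵀ)) := by noncomm_ring
      _ = 0 := by rw [hX, hY, sub_zero]
  have hproj : J * (X - Y) * Jᵀ = 0 := by rw [mul_sub, sub_mul, hJX, hJY, sub_zero]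
  rw [← sub_eq_zero, ← Matrix.mul_mul_transpose_eq_self_of_tendsto_exp_smul hJ hlyap, hproj]
end

section
/- Let A be semistable with the rows of Vᵀ spanning ker(Aᵀ) and the finite-time pseudo controllability Gramian 𝒫(0,t_f) = ∫₀^{t_f}(e^{Aτ}−J)BBᵀ(e^{Aᵀτ}−Jᵀ)dτ. If the pair (A,B) is controllable on [0,t_f], then ker(𝒫(0,t_f)) = im(V), and hence rank(𝒫(0,t_f)) = n − m, where m = dim ker(A). -/
/-!
Since `Aᵀ V = 0`, the rows of `Vᵀ` are fixed by `e^{Aτ}`, so `J e^{Aτ} = J` and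
`e^{Aτ} - J = (I - J) e^{Aτ}`. Integrating, `𝒫(0,t_f) = (I - J) W (I - J)ᵀ` is congruent to the
positive definite Gramian `W`, hence `ker 𝒫 = ker (I - J)ᵀ = ker (I - V Uᵀ)`, which is `im V`
because `Uᵀ V = I`. As `V` is injective, rank–nullity gives `rank 𝒫 = n - m`.
-/

open Matrix Filter NormedSpace MeasureTheory

namespace Matrix

variable {l m n o : Type*}

section Exponential

variable [Fintype m] [DecidableEq m]

theorem continuous_exp : Continuous (exp : Matrix m m ℝ → Matrix m m ℝ) := by
  let _ : SeminormedRing (Matrix m m ℝ) := Matrix.linftyOpSemiNormedRing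
  let _ : NormedRing (Matrix m m ℝ) := Matrix.linftyOpNormedRing
  let _ : NormedAlgebra ℝ (Matrix m m ℝ) := Matrix.linftyOpNormedAlgebra
  exact continuous_iff_continuousAt.2 fun M => (exp_analytic (𝕂 := ℝ) M).continuousAt

theorem mul_exp_eq_self_of_mul_eq_zero {N : Matrix l m ℝ} {M : Matrix m m ℝ} (h : N * M = 0) :
    N * exp M = N := by
  let _ : SeminormedRing (Matrix m m ℝ) := Matrix.linftyOpSemiNormedRing
  let _ : NormedRing (Matrix m m ℝ) := Matrix.linftyOpNormedRing
  let _ : NormedAlgebra ℝ (Matrix m m ℝ) := Matrix.linftyOpNormedAlgebra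
  have hs := (exp_series_hasSum_exp' (𝕂 := ℝ) M).map (mulLeftLinearMap m ℝ N)
    (continuous_const.matrix_mul continuous_id)
  refine (hs.unique (hasSum_single 0 fun k hk => ?_)).trans (by simp)
  obtain ⟨k, rfl⟩ := Nat.exists_eq_succ_of_ne_zero hk
  simp [pow_succ', ← Matrix.mul_assoc, h]

end Exponential

theorem integral_mul_mul_apply {𝕜 α : Type*} [RCLike 𝕜] [MeasurableSpace α] {μ : Measure α}
    [Fintype m] [Fintype n] (C : Matrix l m 𝕜) (F : α → Matrix m n 𝕜) (D : Matrix n o 𝕜)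
    (hF : ∀ i j, Integrable (fun a => F a i j) μ) (i : l) (j : o) :
    ∫ a, (C * F a * D) i j ∂μ = (C * of (fun i j => ∫ a, F a i j ∂μ) * D) i j := by
  simp only [mul_apply, of_apply]
  rw [integral_finsetSum _ fun k _ => (integrable_finsetSum _ fun k' _ =>
    ((hF k' k).const_mul _)).mul_const _]
  refine Finset.sum_congr rfl fun k _ => ?_
  rw [integral_mul_const, integral_finsetSum _ fun k' _ => (hF k' k).const_mul _]
  simp only [integral_const_mul]

theorem PosDef.mul_mul_transpose_mulVec_eq_zero_iff [Fintype m] [Fintype n] {W : Matrix n n ℝ}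
    (hW : W.PosDef) (C : Matrix m n ℝ) {x : m → ℝ} :
    (C * W * Cᵀ) *ᵥ x = 0 ↔ Cᵀ *ᵥ x = 0 := by
  refine ⟨fun h => ?_, fun h => by rw [← mulVec_mulVec, h, mulVec_zero]⟩
  have hquad : Cᵀ *ᵥ x ⬝ᵥ W *ᵥ Cᵀ *ᵥ x = x ⬝ᵥ (C * W * Cᵀ) *ᵥ x := by
    rw [← mulVec_mulVec, ← mulVec_mulVec, dotProduct_mulVec x C, mulVec_transpose]
  by_contra hne
  have hpos := hW.dotProduct_mulVec_pos hne
  rw [star_trivial, hquad, h, dotProduct_zero] at hpos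
  exact hpos.false

theorem mulVec_injective_of_mul_eq_one {R : Type*} [Semiring R] [Fintype m] [Fintype n]
    [DecidableEq n] {V : Matrix m n R} {W : Matrix n m R} (h : W * V = 1) :
    Function.Injective V.mulVec :=
  Function.LeftInverse.injective (g := (W *ᵥ ·)) fun c => by
    simp only [mulVec_mulVec, h, one_mulVec]

theorem one_sub_mul_mulVec_eq_zero_iff {R : Type*} [Ring R] [Fintype m] [Fintype n]
    [DecidableEq m] [DecidableEq n] {V : Matrix m n R} {W : Matrix n m R} (h : W * V = 1)
    {x : m → R} :
    (1 - V * W) *ᵥ x = 0 ↔ ∃ c, x = V *ᵥ c := by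
  rw [sub_mulVec, one_mulVec, sub_eq_zero, ← mulVec_mulVec]
  refine ⟨fun hx => ⟨_, hx⟩, ?_⟩
  rintro ⟨c, rfl⟩
  rw [mulVec_mulVec c W V, h, one_mulVec]

theorem rank_eq_card_sub_of_ker_eq_range {K : Type*} [Field K] [Fintype m] [Fintype n]
    {M : Matrix l m K} {V : Matrix m n K} (hV : Function.Injective V.mulVec)
    (hker : LinearMap.ker M.mulVecLin = LinearMap.range V.mulVecLin) :
    M.rank = Fintype.card m - Fintype.card n := by
  have h := LinearMap.finrank_range_add_finrank_ker M.mulVecLin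
  rw [hker, LinearMap.finrank_range_of_inj (f := V.mulVecLin) hV,
    Module.finrank_fintype_fun_eq_card, Module.finrank_fintype_fun_eq_card] at h
  exact Nat.eq_sub_of_add_eq h

end Matrix

theorem finite_time_pseudo_gramian_kernel_and_rank_general
    {n m p : ℕ} (A : Matrix (Fin n) (Fin n) ℝ)
    (U V : Matrix (Fin n) (Fin m) ℝ) (B : Matrix (Fin n) (Fin p) ℝ)
    (tf : ℝ)
    (W Pf : Matrix (Fin n) (Fin n) ℝ)
    (hV : ∀ x : Fin n → ℝ, Aᵀ *ᵥ x = 0 ↔ ∃ c : Fin m → ℝ, x = V *ᵥ c)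
    (hVU : Vᵀ * U = 1)
    (hW : ∀ i j, W i j = ∫ τ in Set.Ioc (0:ℝ) tf,
      ((NormedSpace.exp (τ • A) * (B * Bᵀ) * (NormedSpace.exp (τ • A))ᵀ) i j))
    (hWpos : W.PosDef)
    (hPf : ∀ i j, Pf i j = ∫ τ in Set.Ioc (0:ℝ) tf,
      (((NormedSpace.exp (τ • A) - U * Vᵀ) * (B * Bᵀ) * (NormedSpace.exp (τ • A) - U * Vᵀ)ᵀ) i j)) :
    (∀ x : Fin n → ℝ, Pf *ᵥ x = 0 ↔ ∃ c : Fin m → ℝ, x = V *ᵥ c)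
    ∧ Pf.rank = n - m := by
  have hUV : Uᵀ * V = 1 := by
    rw [← transpose_transpose (Uᵀ * V), transpose_mul, transpose_transpose, hVU, transpose_one]
  have hVA : Vᵀ * A = 0 := by
    rw [← transpose_transpose (Vᵀ * A), transpose_mul, transpose_transpose, transpose_eq_zero,
      ext_iff_mulVec]
    exact fun c => by rw [← mulVec_mulVec, zero_mulVec, hV]; exact ⟨c, rfl⟩
  have hE : ∀ τ : ℝ, exp (τ • A) - U * Vᵀ = (1 - U * Vᵀ) * exp (τ • A) := fun τ => by
    rw [Matrix.sub_mul, Matrix.one_mul, Matrix.mul_assoc,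
      mul_exp_eq_self_of_mul_eq_zero (by rw [Matrix.mul_smul, hVA, smul_zero])]
  have hPfW : Pf = (1 - U * Vᵀ) * W * (1 - U * Vᵀ)ᵀ := by
    have hcont : Continuous fun τ : ℝ => exp (τ • A) * (B * Bᵀ) * (exp (τ • A))ᵀ := by
      have hexp : Continuous fun τ : ℝ => exp (τ • A) :=
        continuous_exp.comp (continuous_id.smul continuous_const)
      exact (hexp.matrix_mul continuous_const).matrix_mul hexp.matrix_transpose
    ext i j
    rw [hPf, show W = of fun i j => _ from ext hW,
      ← integral_mul_mul_apply _ _ _ fun k l => (hcont.matrix_elem k l).integrableOn_Ioc]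
    simp only [hE, transpose_mul, Matrix.mul_assoc]
  have hker : ∀ x, Pf *ᵥ x = 0 ↔ ∃ c, x = V *ᵥ c := fun x => by
    rw [hPfW, hWpos.mul_mul_transpose_mulVec_eq_zero_iff, transpose_sub, transpose_one,
      transpose_mul, transpose_transpose]
    exact one_sub_mul_mulVec_eq_zero_iff hUV
  refine ⟨hker, ?_⟩
  simpa using rank_eq_card_sub_of_ker_eq_range (mulVec_injective_of_mul_eq_one hUV)
    (Submodule.ext fun x => (hker x).trans (exists_congr fun c => eq_comm))

/-- For a semistable `A` with `J = UVᵀ`, `im(U) = ker(A)`, `im(V) = ker(Aᵀ)`,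
`VᵀU = Iₘ`: if `(A,B)` is controllable on `[0,t_f]` (finite-time controllability
Gramian positive definite), then the finite-time pseudo controllability Gramian
`𝒫(0,t_f) = ∫₀^{t_f}(e^{Aτ}−J)BBᵀ(e^{Aᵀτ}−Jᵀ)dτ` has kernel `im(V)` and rank `n − m`. -/
theorem finite_time_pseudo_gramian_kernel_and_rank
    {n m p : ℕ} (A : Matrix (Fin n) (Fin n) ℝ)
    (U V : Matrix (Fin n) (Fin m) ℝ) (B : Matrix (Fin n) (Fin p) ℝ)
    (tf : ℝ) (htf : 0 < tf)
    (W Pf : Matrix (Fin n) (Fin n) ℝ)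
    (hJ : Tendsto (fun t : ℝ => NormedSpace.exp (t • A)) atTop (nhds (U * Vᵀ)))
    (hU : ∀ x : Fin n → ℝ, A *ᵥ x = 0 ↔ ∃ c : Fin m → ℝ, x = U *ᵥ c)
    (hV : ∀ x : Fin n → ℝ, Aᵀ *ᵥ x = 0 ↔ ∃ c : Fin m → ℝ, x = V *ᵥ c)
    (hVU : Vᵀ * U = 1)
    (hW : ∀ i j, W i j = ∫ τ in Set.Ioc (0:ℝ) tf,
      ((NormedSpace.exp (τ • A) * (B * Bᵀ) * (NormedSpace.exp (τ • A))ᵀ) i j))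
    (hWpos : W.PosDef)
    (hPf : ∀ i j, Pf i j = ∫ τ in Set.Ioc (0:ℝ) tf,
      (((NormedSpace.exp (τ • A) - U * Vᵀ) * (B * Bᵀ) * (NormedSpace.exp (τ • A) - U * Vᵀ)ᵀ) i j)) :
    (∀ x : Fin n → ℝ, Pf *ᵥ x = 0 ↔ ∃ c : Fin m → ℝ, x = V *ᵥ c)
    ∧ Pf.rank = n - m :=
  finite_time_pseudo_gramian_kernel_and_rank_general A U V B tf W Pf hV hVU hW hWpos hPf
end

section
/- For a semistable system (A,B,C) with J := lim_{t→∞} e^{At} satisfying CJB = 0, the H₂-norm squared of the transfer function equals tr(C 𝒫 Cᵀ) = tr(Bᵀ 𝒬 B), where 𝒫 and 𝒬 are the pseudo controllability and observability Gramians. -/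
/-!
With `E t = exp (t • A) - J`, the hypothesis `C J B = 0` turns the impulse response into
`C (E τ) B`, so `tr (gᵀ g) = tr (C (E τ B Bᵀ (E τ)ᵀ) Cᵀ)` and the first identity is linearity of
the integral; the second is the first one for the dual system `(Aᵀ, Cᵀ, Bᵀ)`.
The integrals converge because `E` is again a one-parameter semigroup (as `exp (t • A) J = J =
J exp (t • A)`) and tends to `0`: once `‖E T‖ ≤ e⁻¹`, writing `t = s + k T` with `0 ≤ s ≤ T` gives
`‖E t‖ ≤ (sup_{[0,T]} ‖E‖) e⁻ᵏ`, an exponential bound.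
-/

open Matrix Filter NormedSpace MeasureTheory

open Set Topology Asymptotics

def IsOneParamSemigroup {R : Type*} [Mul R] (f : ℝ → R) : Prop :=
  ∀ s t, 0 ≤ s → 0 ≤ t → f (s + t) = f s * f t

namespace IsOneParamSemigroup

section Limit

variable {R : Type*} [Mul R] [TopologicalSpace R] [ContinuousMul R] [T2Space R]
  {f : ℝ → R} {J : R}

theorem mul_limit (hf : IsOneParamSemigroup f) (hJ : Tendsto f atTop (𝓝 J)) {t : ℝ}
    (ht : 0 ≤ t) : f t * J = J := by
  refine tendsto_nhds_unique (hJ.const_mul (f t)) ?_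
  refine (hJ.comp (tendsto_atTop_add_const_left atTop t tendsto_id)).congr' ?_
  filter_upwards [eventually_ge_atTop 0] with s hs using hf t s ht hs

theorem limit_mul (hf : IsOneParamSemigroup f) (hJ : Tendsto f atTop (𝓝 J)) {t : ℝ}
    (ht : 0 ≤ t) : J * f t = J := by
  refine tendsto_nhds_unique (hJ.mul_const (f t)) ?_
  refine (hJ.comp (tendsto_atTop_add_const_right atTop t tendsto_id)).congr' ?_
  filter_upwards [eventually_ge_atTop 0] with s hs using hf s t hs ht

theorem isIdempotentElem_limit (hf : IsOneParamSemigroup f) (hJ : Tendsto f atTop (𝓝 J)) :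
    IsIdempotentElem J := by
  refine tendsto_nhds_unique (hJ.const_mul J) (tendsto_const_nhds.congr' ?_)
  filter_upwards [eventually_ge_atTop 0] with s hs using (hf.limit_mul hJ hs).symm

end Limit

theorem sub_limit {R : Type*} [Ring R] [TopologicalSpace R] [IsTopologicalRing R] [T2Space R]
    {f : ℝ → R} {J : R} (hf : IsOneParamSemigroup f) (hJ : Tendsto f atTop (𝓝 J)) :
    IsOneParamSemigroup fun t => f t - J := by
  intro s t hs ht
  dsimp only
  rw [hf s t hs ht, sub_mul, mul_sub, mul_sub, hf.mul_limit hJ hs, hf.limit_mul hJ ht,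
    (hf.isIdempotentElem_limit hJ).eq]
  abel

section Decay

variable {R : Type*} [NormedRing R] {f : ℝ → R}

theorem norm_add_nat_mul_le (hf : IsOneParamSemigroup f) {T K r : ℝ} (hT : 0 ≤ T)
    (hfT : ‖f T‖ ≤ r) (hK : ∀ s ∈ Icc 0 T, ‖f s‖ ≤ K) (k : ℕ) {s : ℝ} (hs : s ∈ Icc 0 T) :
    ‖f (s + k * T)‖ ≤ K * r ^ k := by
  induction k with
  | zero => simpa using hK s hs
  | succ k ih =>
    have hsplit : s + (k + 1 : ℕ) * T = T + (s + k * T) := by push_cast; ring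
    calc ‖f (s + (k + 1 : ℕ) * T)‖ = ‖f T * f (s + k * T)‖ := by
          rw [hsplit, hf T _ hT (by have := hs.1; positivity)]
      _ ≤ r * (K * r ^ k) :=
          (norm_mul_le _ _).trans (mul_le_mul hfT ih (norm_nonneg _) ((norm_nonneg _).trans hfT))
      _ = K * r ^ (k + 1) := by ring

theorem exists_isBigO_exp_neg (hf : IsOneParamSemigroup f) (hcont : ContinuousOn f (Ici 0))
    (h0 : Tendsto f atTop (𝓝 0)) : ∃ a > 0, f =O[atTop] fun t => Real.exp (-a * t) := by
  obtain ⟨T, hT, hfT⟩ : ∃ T > 0, ‖f T‖ ≤ Real.exp (-1) := by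
    have := (h0.norm.eventually (ge_mem_nhds (by simpa using Real.exp_pos (-1)))).and
      (eventually_gt_atTop 0)
    simpa [and_comm] using this.exists
  obtain ⟨K, hK⟩ := isCompact_Icc.exists_bound_of_continuousOn (hcont.mono Icc_subset_Ici_self)
  refine ⟨1 / T, by positivity, IsBigO.of_bound (K * Real.exp 1) ?_⟩
  filter_upwards [eventually_ge_atTop 0] with t ht
  set k := ⌊t / T⌋₊
  have hkT : k * T ≤ t := (le_div_iff₀ hT).mp (Nat.floor_le (by positivity))
  have hTk : t < (k + 1) * T := (div_lt_iff₀ hT).mp (Nat.lt_floor_add_one _)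
  have hbound := hf.norm_add_nat_mul_le hT.le hfT hK k (s := t - k * T) ⟨by linarith, by linarith⟩
  rw [sub_add_cancel, ← Real.exp_nat_mul] at hbound
  have hK0 : 0 ≤ K := (norm_nonneg _).trans (hK 0 ⟨le_rfl, hT.le⟩)
  calc ‖f t‖ ≤ K * Real.exp (k * -1) := hbound
    _ ≤ K * Real.exp (1 + -(1 / T) * t) := by
        gcongr
        rw [neg_mul, one_div, inv_mul_eq_div]
        have : t / T < k + 1 := (div_lt_iff₀ hT).mpr hTk
        linarith
    _ = K * Real.exp 1 * ‖Real.exp (-(1 / T) * t)‖ := by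
        rw [Real.exp_add, Real.norm_of_nonneg (Real.exp_pos _).le]; ring

end Decay

end IsOneParamSemigroup

namespace Matrix

theorem integral_linearMap_of_integrable_apply {m n α : Type*} [Fintype m] [Fintype n]
    [MeasurableSpace α] {μ : Measure α} (L : Matrix m n ℝ →ₗ[ℝ] ℝ) {F : α → Matrix m n ℝ}
    (hF : ∀ i j, Integrable (fun x => F x i j) μ) :
    ∫ x, L (F x) ∂μ = L (of fun i j => ∫ x, F x i j ∂μ) := by
  classical
  have hL (M : Matrix m n ℝ) : L M = ∑ i, ∑ j, M i j * L (single i j 1) := by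
    conv_lhs => rw [matrix_eq_sum_single M]
    simp only [map_sum]
    refine Finset.sum_congr rfl fun i _ => Finset.sum_congr rfl fun j _ => ?_
    rw [← smul_eq_mul, ← map_smul, smul_single, smul_eq_mul, mul_one]
  calc ∫ x, L (F x) ∂μ = ∫ x, ∑ i, ∑ j, F x i j * L (single i j 1) ∂μ :=
        integral_congr_ae (.of_forall fun x => hL (F x))
    _ = ∑ i, ∑ j, (∫ x, F x i j ∂μ) * L (single i j 1) := by
        rw [integral_finsetSum _ fun i _ => integrable_finsetSum _ fun j _ => (hF i j).mul_const _]
        refine Finset.sum_congr rfl fun i _ => ?_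
        rw [integral_finsetSum _ fun j _ => (hF i j).mul_const _]
        simp only [integral_mul_const]
    _ = L (of fun i j => ∫ x, F x i j ∂μ) := (hL _).symm

open scoped Matrix.Norms.Frobenius in
theorem norm_apply_le_frobenius_norm {m n α : Type*} [Fintype m] [Fintype n]
    [SeminormedAddCommGroup α] (A : Matrix m n α) (i : m) (j : n) : ‖A i j‖ ≤ ‖A‖ :=
  (PiLp.norm_apply_le (WithLp.toLp 2 (A i)) j).trans
    (PiLp.norm_apply_le (WithLp.toLp 2 fun i => WithLp.toLp 2 (A i)) i)

variable {n : Type*} [Fintype n] [DecidableEq n]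

theorem isOneParamSemigroup_exp_smul (A : Matrix n n ℝ) :
    IsOneParamSemigroup fun t : ℝ => exp (t • A) := fun s t _ _ => by
  dsimp only
  rw [add_smul, exp_add_of_commute _ _ (((Commute.refl A).smul_left s).smul_right t)]

section Frobenius

/- The Frobenius norm is submultiplicative and invariant under transposition, and its topology is
definitionally the product topology in which the limit `J` is taken. -/
open scoped Matrix.Norms.Frobenius

theorem continuous_exp_smul (A : Matrix n n ℝ) : Continuous fun t : ℝ => exp (t • A) :=
  continuous_iff_continuousAt.mpr fun t => (hasDerivAt_exp_smul_const A t).continuousAt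

theorem exists_isBigO_exp_smul_sub_limit {A J : Matrix n n ℝ}
    (hJ : Tendsto (fun t : ℝ => exp (t • A)) atTop (𝓝 J)) :
    ∃ a > 0, (fun t : ℝ => exp (t • A) - J) =O[atTop] fun t => Real.exp (-a * t) :=
  ((isOneParamSemigroup_exp_smul A).sub_limit hJ).exists_isBigO_exp_neg
    ((continuous_exp_smul A).sub continuous_const).continuousOn (sub_self J ▸ hJ.sub_const J)

theorem integrableOn_Ioi_exp_smul_sub_mul_mul_transpose_apply {A J : Matrix n n ℝ}
    (hJ : Tendsto (fun t : ℝ => exp (t • A)) atTop (𝓝 J)) (M : Matrix n n ℝ) (i j : n) :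
    IntegrableOn (fun t : ℝ => ((exp (t • A) - J) * M * (exp (t • A) - J)ᵀ) i j) (Ioi 0) := by
  have hEcont : Continuous fun t : ℝ => exp (t • A) - J :=
    (continuous_exp_smul A).sub continuous_const
  obtain ⟨a, ha, hE⟩ := exists_isBigO_exp_smul_sub_limit hJ
  have hEt : (fun t : ℝ => (exp (t • A) - J)ᵀ) =O[atTop] fun t => Real.exp (-a * t) :=
    isBigO_norm_left.mp (by simpa only [frobenius_norm_transpose] using hE.norm_left)
  have hF : (fun t : ℝ => (exp (t • A) - J) * M * (exp (t • A) - J)ᵀ) =O[atTop]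
      fun t => Real.exp (-(2 * a) * t) :=
    ((hE.mul (isBigO_const_const M one_ne_zero atTop)).mul hEt).congr_right fun t => by
      rw [mul_one, ← Real.exp_add]; ring_nf
  refine integrable_of_isBigO_exp_neg (by positivity) ?_
    ((IsBigO.of_bound 1 (.of_forall fun t => ?_)).trans hF)
  · exact (((hEcont.mul continuous_const).mul hEcont.matrix_transpose).matrix_elem i j).continuousOn
  · rw [one_mul]
    exact norm_apply_le_frobenius_norm _ i j

end Frobenius

theorem integral_trace_impulse_response_eq_trace_gramian {p q : Type*} [Fintype p] [Fintype q]
    {A J P : Matrix n n ℝ} (B : Matrix n p ℝ) (C : Matrix q n ℝ)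
    (hJ : Tendsto (fun t : ℝ => exp (t • A)) atTop (𝓝 J)) (hCJB : C * J * B = 0)
    (hP : ∀ i j, P i j = ∫ τ in Ioi (0 : ℝ),
      ((exp (τ • A) - J) * (B * Bᵀ) * (exp (τ • A) - J)ᵀ) i j) :
    ∫ τ in Ioi (0 : ℝ), trace ((C * exp (τ • A) * B)ᵀ * (C * exp (τ • A) * B)) =
      trace (C * P * Cᵀ) := by
  have hg (τ : ℝ) : trace ((C * exp (τ • A) * B)ᵀ * (C * exp (τ • A) * B)) =
      trace (C * ((exp (τ • A) - J) * (B * Bᵀ) * (exp (τ • A) - J)ᵀ) * Cᵀ) := by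
    rw [← sub_zero (C * exp (τ • A) * B), ← hCJB, ← Matrix.sub_mul, ← Matrix.mul_sub,
      trace_mul_comm]
    simp only [transpose_mul, Matrix.mul_assoc]
  calc _ = ∫ τ in Ioi (0 : ℝ),
        (traceLinearMap q ℝ ℝ ∘ₗ mulRightLinearMap q ℝ Cᵀ ∘ₗ mulLeftLinearMap n ℝ C)
          ((exp (τ • A) - J) * (B * Bᵀ) * (exp (τ • A) - J)ᵀ) :=
        integral_congr_ae (.of_forall hg)
    _ = trace (C * P * Cᵀ) := by
        rw [integral_linearMap_of_integrable_apply _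
          (integrableOn_Ioi_exp_smul_sub_mul_mul_transpose_apply hJ _), ← ext_iff.mp hP]
        rfl

end Matrix

/-- For a semistable system `(A,B,C)` with `J := lim_{t→∞} e^{At}` and `CJB = 0`,
the `H₂`-norm squared of the transfer function, i.e.
`∫₀^∞ tr(g(τ)ᵀ g(τ)) dτ` with impulse response `g(τ) = C e^{Aτ} B`,
equals `tr(C 𝒫 Cᵀ)` and `tr(Bᵀ 𝒬 B)` for the pseudo Gramians `𝒫`, `𝒬`. -/
theorem h2_norm_sq_eq_trace_pseudo_gramians
    {n p q : ℕ} (A J : Matrix (Fin n) (Fin n) ℝ)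
    (B : Matrix (Fin n) (Fin p) ℝ) (C : Matrix (Fin q) (Fin n) ℝ)
    (P Q : Matrix (Fin n) (Fin n) ℝ)
    (hJ : Tendsto (fun t : ℝ => exp (t • A)) atTop (nhds J))
    (hCJB : C * J * B = 0)
    (hP : ∀ i j, P i j = ∫ τ in Set.Ioi (0:ℝ),
      (((exp (τ • A) - J) * (B * Bᵀ) * (exp (τ • A) - J)ᵀ) i j))
    (hQ : ∀ i j, Q i j = ∫ τ in Set.Ioi (0:ℝ),
      (((exp (τ • A) - J)ᵀ * (Cᵀ * C) * (exp (τ • A) - J)) i j)) :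
    (∫ τ in Set.Ioi (0:ℝ),
        Matrix.trace ((C * exp (τ • A) * B)ᵀ * (C * exp (τ • A) * B)))
      = Matrix.trace (C * P * Cᵀ)
    ∧ (∫ τ in Set.Ioi (0:ℝ),
        Matrix.trace ((C * exp (τ • A) * B)ᵀ * (C * exp (τ • A) * B)))
      = Matrix.trace (Bᵀ * Q * B) := by
  refine ⟨integral_trace_impulse_response_eq_trace_gramian B C hJ hCJB hP, ?_⟩
  have hJt : Tendsto (fun t : ℝ => exp (t • Aᵀ)) atTop (𝓝 Jᵀ) := by
    simpa only [← transpose_smul, exp_transpose, Function.comp_def, id] using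
      (continuous_id.matrix_transpose.tendsto J).comp hJ
  have hBJC : Bᵀ * Jᵀ * Cᵀ = 0 := by
    rw [← transpose_mul, ← transpose_mul, ← Matrix.mul_assoc, hCJB, transpose_zero]
  have hQt : ∀ i j, Q i j = ∫ τ in Ioi (0 : ℝ),
      ((exp (τ • Aᵀ) - Jᵀ) * (Cᵀ * Cᵀᵀ) * (exp (τ • Aᵀ) - Jᵀ)ᵀ) i j := by
    simpa only [← transpose_smul, exp_transpose, ← transpose_sub, transpose_transpose] using hQ
  calc _ = ∫ τ in Ioi (0 : ℝ), trace ((Bᵀ * exp (τ • Aᵀ) * Cᵀ)ᵀ * (Bᵀ * exp (τ • Aᵀ) * Cᵀ)) := by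
        congr 1 with τ
        rw [← trace_mul_comm]
        simp only [← transpose_smul, exp_transpose, transpose_mul, transpose_transpose,
          Matrix.mul_assoc]
    _ = trace (Bᵀ * Q * Bᵀᵀ) := integral_trace_impulse_response_eq_trace_gramian Cᵀ Bᵀ hJt hBJC hQt
    _ = trace (Bᵀ * Q * B) := by rw [transpose_transpose]
end

section
/- Let ℒ be a directed-graph Laplacian (ℒ𝟙 = 0, nonnegative diagonal, nonpositive off-diagonal), Π ∈ ℝ^{n×r} a characteristic matrix of a partition (binary with exactly one 1 per row, each column nonzero), and Π† = (ΠᵀNΠ)⁻¹ΠᵀN for a positive diagonal matrix N. Then ℒ̂ := Π†ℒΠ satisfies ℒ̂𝟙_r = 0, has nonnegative diagonal entries, and nonpositive off-diagonal entries; i.e., ℒ̂ is again a Laplacian matrix. -/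
/-!
Since every row of `Π` has a single `1`, `ΠᵀNΠ` is the diagonal matrix of the (positive) class
masses, so `ℒ̂` is a nonnegative diagonal matrix times `Πᵀ(Nℒ)Π`. The entry `(k, l)` of the
latter sums `Nᵢ ℒᵢⱼ` over `i` in class `k` and `j` in class `l`, and for `k ≠ l` these pairs
have `i ≠ j`, so `ℒ̂` keeps the sign pattern off the diagonal. `Π𝟙 = 𝟙` gives `ℒ̂𝟙 = 0`, and a
zero row sum with nonpositive off-diagonal entries forces a nonnegative diagonal.
-/

open Matrix

namespace Matrix

variable {ι κ α R : Type*}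

theorem mulVec_one_eq_one_of_sum_eq_one [NonAssocSemiring α] [Fintype κ] {P : Matrix ι κ α}
    (hrow : ∀ i, ∑ k, P i k = 1) : P *ᵥ 1 = 1 :=
  funext fun i => by simpa [mulVec, dotProduct] using hrow i

theorem transpose_mul_diagonal_mul_eq_diagonal [CommSemiring α] [Fintype ι] [DecidableEq ι]
    [DecidableEq κ] {P : Matrix ι κ α} (hdisj : ∀ i k l, k ≠ l → P i k * P i l = 0)
    (d : ι → α) : Pᵀ * diagonal d * P = diagonal fun k => ∑ i, d i * P i k ^ 2 := by
  ext k l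
  rw [mul_apply]
  simp only [mul_diagonal, transpose_apply]
  obtain rfl | hkl := eq_or_ne k l
  · simp only [diagonal_apply_eq]
    exact Finset.sum_congr rfl fun i _ => by ring
  · rw [diagonal_apply_ne _ hkl]
    exact Finset.sum_eq_zero fun i _ => by rw [mul_right_comm, hdisj i k l hkl, zero_mul]

theorem inv_diagonal_of_ne_zero [Field α] [Fintype ι] [DecidableEq ι] {v : ι → α}
    (hv : ∀ i, v i ≠ 0) : (diagonal v)⁻¹ = diagonal v⁻¹ :=
  inv_eq_right_inv <| by
    rw [diagonal_mul_diagonal, ← diagonal_one]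
    exact congrArg diagonal <| funext fun i => mul_inv_cancel₀ (hv i)

variable [CommRing R] [LinearOrder R] [IsStrictOrderedRing R]

theorem mul_eq_zero_of_eq_zero_or_eq_one_of_sum_eq_one [Fintype κ] {P : Matrix ι κ R}
    (h01 : ∀ i k, P i k = 0 ∨ P i k = 1) (hrow : ∀ i, ∑ k, P i k = 1) {i : ι} {k l : κ}
    (hkl : k ≠ l) : P i k * P i l = 0 := by
  have hP : ∀ k, 0 ≤ P i k := fun k => (h01 i k).elim (·.ge) (·.symm ▸ zero_le_one)
  have hle : P i k + P i l ≤ 1 :=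
    hrow i ▸ Finset.add_le_sum (fun k _ => hP k) (Finset.mem_univ k) (Finset.mem_univ l) hkl
  rcases h01 i k with hk | hk <;> rcases h01 i l with hl | hl <;> simp_all
  norm_num at hle

def IsZMatrix (A : Matrix ι ι R) : Prop := ∀ i j, i ≠ j → A i j ≤ 0

theorem IsZMatrix.diag_nonneg_of_mulVec_one_eq_zero [Fintype ι] [DecidableEq ι]
    {A : Matrix ι ι R} (hA : A.IsZMatrix) (h1 : A *ᵥ 1 = 0) (i : ι) : 0 ≤ A i i := by
  have hrow : A i i + ∑ j ∈ Finset.univ.erase i, A i j = 0 := by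
    rw [Finset.add_sum_erase _ _ (Finset.mem_univ i)]
    simpa [mulVec, dotProduct] using congrFun h1 i
  have hoff : ∑ j ∈ Finset.univ.erase i, A i j ≤ 0 :=
    Finset.sum_nonpos fun j hj => hA i j (Finset.ne_of_mem_erase hj).symm
  linarith

theorem IsZMatrix.diagonal_mul [Fintype ι] [DecidableEq ι] {A : Matrix ι ι R}
    (hA : A.IsZMatrix) {v : ι → R} (hv : 0 ≤ v) : (diagonal v * A).IsZMatrix :=
  fun i j hij => by
    rw [Matrix.diagonal_mul]
    exact mul_nonpos_of_nonneg_of_nonpos (hv i) (hA i j hij)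

theorem IsZMatrix.transpose_mul_mul [Fintype ι] [Fintype κ] {A : Matrix ι ι R}
    (hA : A.IsZMatrix) {P : Matrix ι κ R} (hP : ∀ i k, 0 ≤ P i k)
    (hdisj : ∀ i k l, k ≠ l → P i k * P i l = 0) : (Pᵀ * A * P).IsZMatrix :=
  fun k l hkl => by
    simp only [mul_apply, transpose_apply, Finset.sum_mul]
    refine Finset.sum_nonpos fun j _ => Finset.sum_nonpos fun i _ => ?_
    obtain rfl | hij := eq_or_ne i j
    · rw [mul_comm (P i k), mul_assoc, hdisj i k l hkl, mul_zero]
    · exact mul_nonpos_of_nonpos_of_nonneg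
        (mul_nonpos_of_nonneg_of_nonpos (hP i k) (hA i j hij)) (hP j l)

end Matrix

theorem reduced_laplacian_is_laplacian_general
    {n r : ℕ} (L : Matrix (Fin n) (Fin n) ℝ)
    (Pi : Matrix (Fin n) (Fin r) ℝ) (d : Fin n → ℝ)
    (hL1 : L *ᵥ (fun _ => (1:ℝ)) = 0)
    (hLoff : ∀ i j, i ≠ j → L i j ≤ 0)
    (hPi01 : ∀ i j, Pi i j = 0 ∨ Pi i j = 1)
    (hPirow : ∀ i, ∑ j, Pi i j = 1)
    (hPicol : ∀ j, ∃ i, Pi i j = 1)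
    (hd : ∀ i, 0 < d i) :
    ((Piᵀ * Matrix.diagonal d * Pi)⁻¹ * (Piᵀ * Matrix.diagonal d) * L * Pi)
        *ᵥ (fun _ => (1:ℝ)) = 0
    ∧ (∀ i, 0 ≤ ((Piᵀ * Matrix.diagonal d * Pi)⁻¹ * (Piᵀ * Matrix.diagonal d) * L * Pi) i i)
    ∧ (∀ i j, i ≠ j →
        ((Piᵀ * Matrix.diagonal d * Pi)⁻¹ * (Piᵀ * Matrix.diagonal d) * L * Pi) i j ≤ 0) := by
  have hPnonneg : ∀ i k, 0 ≤ Pi i k := fun i k => (hPi01 i k).elim (·.ge) (·.symm ▸ zero_le_one)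
  have hdisj : ∀ i k l, k ≠ l → Pi i k * Pi i l = 0 := fun _ _ _ =>
    mul_eq_zero_of_eq_zero_or_eq_one_of_sum_eq_one hPi01 hPirow
  have hmass : ∀ k, 0 < ∑ i, d i * Pi i k ^ 2 := fun k =>
    let ⟨i, hi⟩ := hPicol k
    Finset.sum_pos' (fun j _ => mul_nonneg (hd j).le (sq_nonneg _))
      ⟨i, Finset.mem_univ i, by simpa [hi] using hd i⟩
  have hrowsum : ((Piᵀ * diagonal d * Pi)⁻¹ * (Piᵀ * diagonal d) * L * Pi) *ᵥ 1 = 0 := by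
    rw [← mulVec_mulVec, mulVec_one_eq_one_of_sum_eq_one hPirow, ← mulVec_mulVec,
      show L *ᵥ 1 = 0 from hL1, mulVec_zero]
  have hZ : ((Piᵀ * diagonal d * Pi)⁻¹ * (Piᵀ * diagonal d) * L * Pi).IsZMatrix := by
    rw [transpose_mul_diagonal_mul_eq_diagonal hdisj,
      inv_diagonal_of_ne_zero fun k => (hmass k).ne']
    convert ((IsZMatrix.diagonal_mul hLoff fun i => (hd i).le).transpose_mul_mul hPnonneg
      hdisj).diagonal_mul fun k => inv_nonneg.2 (hmass k).le using 1
    simp only [Matrix.mul_assoc]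
    rfl
  exact ⟨hrowsum, hZ.diag_nonneg_of_mulVec_one_eq_zero hrowsum, hZ⟩

/-- Let `ℒ` be a directed-graph Laplacian (`ℒ𝟙 = 0`, nonnegative diagonal,
nonpositive off-diagonal), `Π` a characteristic matrix of a partition (binary,
exactly one `1` per row, each column nonzero), and `Π† = (ΠᵀNΠ)⁻¹ΠᵀN` for a
positive diagonal `N`. Then `ℒ̂ := Π†ℒΠ` satisfies `ℒ̂𝟙ᵣ = 0`, has nonnegative
diagonal entries, and nonpositive off-diagonal entries: it is again a Laplacian. -/
theorem reduced_laplacian_is_laplacian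
    {n r : ℕ} (L : Matrix (Fin n) (Fin n) ℝ)
    (Pi : Matrix (Fin n) (Fin r) ℝ) (d : Fin n → ℝ)
    (hL1 : L *ᵥ (fun _ => (1:ℝ)) = 0)
    (hLdiag : ∀ i, 0 ≤ L i i)
    (hLoff : ∀ i j, i ≠ j → L i j ≤ 0)
    (hPi01 : ∀ i j, Pi i j = 0 ∨ Pi i j = 1)
    (hPirow : ∀ i, ∑ j, Pi i j = 1)
    (hPicol : ∀ j, ∃ i, Pi i j = 1)
    (hd : ∀ i, 0 < d i)
    (hinv : IsUnit (Piᵀ * Matrix.diagonal d * Pi).det) :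
    ((Piᵀ * Matrix.diagonal d * Pi)⁻¹ * (Piᵀ * Matrix.diagonal d) * L * Pi)
        *ᵥ (fun _ => (1:ℝ)) = 0
    ∧ (∀ i, 0 ≤ ((Piᵀ * Matrix.diagonal d * Pi)⁻¹ * (Piᵀ * Matrix.diagonal d) * L * Pi) i i)
    ∧ (∀ i j, i ≠ j →
        ((Piᵀ * Matrix.diagonal d * Pi)⁻¹ * (Piᵀ * Matrix.diagonal d) * L * Pi) i j ≤ 0) :=
  reduced_laplacian_is_laplacian_general L Pi d hL1 hLoff hPi01 hPirow hPicol hd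
end
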